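/- Let C be a cycle of goods and N = {1,2,3} a set of three agents, 0 < c ≤ 1. If for two different agents i and j, the intersection of a bundle of an mms-split of i and a bundle of an mms-split of j has value at least c·mms(i) for agent i, then there exists a c-sufficient allocation of goods on C among the three agents. -/

import Mathlib

open scoped BigOperators

noncomputable section

/-- Total value of a bundle under an additive utility. -/
def bval {V : Type*} [DecidableEq V] (u : V → ℝ) (S : Finset V) : ℝ := ∑ v ∈ S, u v

/-- A `G`-bundle: a (possibly empty) set of vertices inducing a connected subgraph. -/
def IsBundle {V : Type*} (G : SimpleGraph V) (S : Finset V) : Prop :=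
  (S : Set V) = ∅ ∨ (G.induce (S : Set V)).Connected

/-- A split of the vertex set `A` into `n` pairwise disjoint `G`-bundles covering `A`. -/
def IsSplitOn {V : Type*} [DecidableEq V] (G : SimpleGraph V) (A : Finset V) (n : ℕ)
    (P : Fin n → Finset V) : Prop :=
  (∀ i, IsBundle G (P i)) ∧ (∀ i j, i ≠ j → Disjoint (P i) (P j)) ∧
  (∀ i, P i ⊆ A) ∧ (∀ v ∈ A, ∃ i, v ∈ P i)

/-- The maximin share over splits of `A` into `n` `G`-bundles. -/
def mmsOn {V : Type*} [DecidableEq V] (G : SimpleGraph V) (A : Finset V)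
    (n : ℕ) (u : V → ℝ) : ℝ :=
  sSup {q : ℝ | ∃ P : Fin n → Finset V, IsSplitOn G A n P ∧ ∀ i, q ≤ bval u (P i)}

/-- The maximin share `mms^(n)(G,u)`. -/
def mms {V : Type*} [DecidableEq V] [Fintype V] (G : SimpleGraph V)
    (n : ℕ) (u : V → ℝ) : ℝ := mmsOn G Finset.univ n u

/-- The cycle on `m` vertices, identified with `ZMod m`. -/
def cycleGraph (m : ℕ) : SimpleGraph (ZMod m) :=
  SimpleGraph.fromRel (fun v w => w = v + 1)

end

/-!
Measure positions on the cycle from a vertex `a`, so that `seg a s t` consists of the vertices at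
positions `s, …, t - 1`. A bundle avoiding `a` is such a segment and a bundle containing `a` is the
complement of one; hence a split into three bundles is cut at three positions `e₁ ≤ e₂ ≤ e₃`.

First find a bundle `X` worth `c·mms(i)` to `i` inside a part of each split: `P k ∩ Q l` is a bundle
unless `P k ∪ Q l` is the whole cycle, and then a second part of `P` lies inside `Q l`. Start the
positions at `X = seg a 0 x`; the two parts of `Q` other than the one containing `X` are
`seg a n n'` and `seg a n' p` with `x ≤ n`. Cutting at `0, x, n'` gives `X` to `i` and a superset
of a part of `Q` to `j`, and the third agent `t` is content with one of the two other pieces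
unless, the whole cycle being worth `3·mms(t)` to her, she is content with `X`. Then the cuts
`x ≤ e₁ ≤ e₂ ≤ e₃` of `P` give `i` a part of `P`, `t` a superset of `X` and `j` a superset of a part
of `Q`: cut at `0, e₁, e₂` if `e₂ ≤ n'` and at `n, e₂, e₃` otherwise.
-/

namespace ZMod

lemma val_add_natCast_of_le {m : ℕ} [NeZero m] (x : ZMod m) {p : ℕ} (hp : p ≤ m) :
    (x + p).val = if x.val + p < m then x.val + p else x.val + p - m := by
  rcases hp.lt_or_eq with hp | rfl
  · have hpv : (p : ZMod m).val = p := val_cast_of_lt hp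
    split_ifs with h
    · rw [val_add_of_lt (by omega), hpv]
    · rw [val_add_of_le (by omega), hpv]
  · simp

lemma sub_add_natCast {m : ℕ} (w a : ZMod m) {p : ℕ} (hp : p ≤ m) :
    w - (a + p) = (w - a) + ((m - p : ℕ) : ZMod m) := by
  rw [Nat.cast_sub hp, natCast_self]
  ring

end ZMod

open ZMod

lemma Fin.exists_third {i j : Fin 3} (hij : i ≠ j) :
    ∃ t, i ≠ t ∧ j ≠ t ∧ ∀ a, a = i ∨ a = j ∨ a = t := by
  revert i j
  decide

lemma Fin.exists_two_others (r : Fin 3) :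
    ∃ s u, r ≠ s ∧ r ≠ u ∧ s ≠ u ∧ ∀ k, k = r ∨ k = s ∨ k = u := by
  revert r
  decide

lemma Finset.Ico_adjacent_of_union_eq_Ico {s₁ s₂ u₁ u₂ e₁ e₂ : ℕ} (hs : s₁ < s₂) (hu : u₁ < u₂)
    (h : Finset.Ico s₁ s₂ ∪ Finset.Ico u₁ u₂ = Finset.Ico e₁ e₂)
    (hd : Disjoint (Finset.Ico s₁ s₂) (Finset.Ico u₁ u₂)) :
    (s₁ = e₁ ∧ s₂ = u₁ ∧ u₂ = e₂) ∨ (u₁ = e₁ ∧ u₂ = s₁ ∧ s₂ = e₂) := by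
  have hmem (p : ℕ) := Finset.ext_iff.mp h p
  have hdisj (p : ℕ) : p ∈ Finset.Ico s₁ s₂ → p ∉ Finset.Ico u₁ u₂ :=
    fun hp => Finset.disjoint_left.mp hd hp
  simp only [Finset.mem_union, Finset.mem_Ico] at hmem hdisj
  have := hmem s₁; have := hmem u₁; have := hmem e₁; have := hmem s₂; have := hmem u₂
  have := hmem (s₂ - 1); have := hmem (u₂ - 1); have := hdisj s₁; have := hdisj u₁
  omega

section Split

variable {V : Type*} [DecidableEq V] {G : SimpleGraph V}

lemma IsSplitOn.sum_bval {A : Finset V} {n : ℕ} {P : Fin n → Finset V}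
    (hP : IsSplitOn G A n P) (u : V → ℝ) : bval u A = ∑ k, bval u (P k) := by
  obtain ⟨-, hdisj, hsub, hcov⟩ := hP
  have hA : A = Finset.univ.biUnion P := by
    ext v
    simp only [Finset.mem_biUnion, Finset.mem_univ, true_and]
    exact ⟨hcov v, fun ⟨k, hk⟩ => hsub k hk⟩
  rw [bval, hA, Finset.sum_biUnion fun k _ l _ hkl => hdisj k l hkl]
  rfl

lemma IsSplitOn.comp_injective {A : Finset V} {n : ℕ} {P : Fin n → Finset V}
    (hP : IsSplitOn G A n P) {f : Fin n → Fin n} (hf : Function.Injective f) :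
    IsSplitOn G A n (P ∘ f) := by
  obtain ⟨hbun, hdisj, hsub, hcov⟩ := hP
  refine ⟨fun k => hbun _, fun k l hkl => hdisj _ _ (hf.ne hkl), fun k => hsub _, fun v hv => ?_⟩
  obtain ⟨k, hk⟩ := hcov v hv
  obtain ⟨l, rfl⟩ := Finite.surjective_of_injective hf k
  exact ⟨l, hk⟩

lemma bval_nonneg {u : V → ℝ} (hu : ∀ v, 0 ≤ u v) (S : Finset V) : 0 ≤ bval u S :=
  Finset.sum_nonneg fun v _ => hu v

lemma bval_mono {u : V → ℝ} (hu : ∀ v, 0 ≤ u v) {S T : Finset V} (h : S ⊆ T) :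
    bval u S ≤ bval u T :=
  Finset.sum_le_sum_of_subset_of_nonneg h fun v _ _ => hu v

variable [Fintype V]

lemma mms_nonneg {n : ℕ} [NeZero n] {u : V → ℝ} (hu : ∀ v, 0 ≤ u v) {P : Fin n → Finset V}
    (hP : IsSplitOn G Finset.univ n P) : 0 ≤ mms G n u :=
  le_csSup
    ⟨bval u Finset.univ, fun _ ⟨_, _, hq⟩ => (hq 0).trans (bval_mono hu (Finset.subset_univ _))⟩
    ⟨P, hP, fun _ => bval_nonneg hu _⟩

lemma mul_mms_le {n : ℕ} {u : V → ℝ} (hu : ∀ v, 0 ≤ u v) :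
    n * mms G n u ≤ bval u Finset.univ := by
  rcases n.eq_zero_or_pos with rfl | hn
  · simpa using bval_nonneg hu _
  rw [← le_div_iff₀' (by positivity)]
  refine Real.sSup_le (fun q ⟨P, hP, hq⟩ => ?_) (div_nonneg (bval_nonneg hu _) n.cast_nonneg)
  rw [le_div_iff₀' (by positivity), hP.sum_bval]
  calc (n : ℝ) * q = ∑ _k : Fin n, q := by simp
    _ ≤ ∑ k, bval u (P k) := Finset.sum_le_sum fun k _ => hq k

/-- A `c`-sufficient allocation, with the thresholds `μ a` in place of `mms(a)`. -/
def IsSufficientAllocation (G : SimpleGraph V) {n : ℕ} (u : Fin n → V → ℝ) (μ : Fin n → ℝ)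
    (c : ℝ) (R : Fin n → Finset V) : Prop :=
  IsSplitOn G Finset.univ n R ∧ ∀ a, c * μ a ≤ bval (u a) (R a)

lemma exists_isSufficientAllocation_of_split {G : SimpleGraph V} {u : Fin 3 → V → ℝ}
    {μ : Fin 3 → ℝ} {c : ℝ} {i j t : Fin 3} (hall : ∀ a, a = i ∨ a = j ∨ a = t) (hij : i ≠ j)
    (hit : i ≠ t) (hjt : j ≠ t) {D : Fin 3 → Finset V} (hD : IsSplitOn G Finset.univ 3 D)
    (pi pj pt : Fin 3) (hpij : pi ≠ pj) (hpit : pi ≠ pt) (hpjt : pj ≠ pt)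
    (hi : c * μ i ≤ bval (u i) (D pi)) (hj : c * μ j ≤ bval (u j) (D pj))
    (ht : c * μ t ≤ bval (u t) (D pt)) : ∃ R, IsSufficientAllocation G u μ c R := by
  let f a := if a = i then pi else if a = j then pj else pt
  have hfi : f i = pi := if_pos rfl
  have hfj : f j = pj := by simp [f, hij.symm]
  have hft : f t = pt := by simp [f, hit.symm, hjt.symm]
  have hf : Function.Injective f := by
    intro a b hab
    rcases hall a with rfl | rfl | rfl <;> rcases hall b with rfl | rfl | rfl <;>
      simp_all [eq_comm]
  refine ⟨D ∘ f, hD.comp_injective hf, fun a => ?_⟩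
  rcases hall a with rfl | rfl | rfl
  · simpa [hfi] using hi
  · simpa [hfj] using hj
  · simpa [hft] using ht

end Split

lemma cycleGraph_adj {m : ℕ} {y z : ZMod m} :
    (cycleGraph m).Adj y z ↔ y ≠ z ∧ (z = y + 1 ∨ y = z + 1) := by
  simp [cycleGraph]

section Cycle

variable {m : ℕ} [NeZero m]

def seg (a : ZMod m) (s t : ℕ) : Finset (ZMod m) :=
  Finset.univ.filter fun w => s ≤ (w - a).val ∧ (w - a).val < t

@[simp]
lemma mem_seg {a w : ZMod m} {s t : ℕ} : w ∈ seg a s t ↔ s ≤ (w - a).val ∧ (w - a).val < t := by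
  simp [seg]

lemma add_natCast_mem_seg {a : ZMod m} {p s t : ℕ} (hp : p < m) :
    a + p ∈ seg a s t ↔ s ≤ p ∧ p < t := by
  rw [mem_seg, add_sub_cancel_left, val_cast_of_lt hp]

lemma seg_zero_one (a : ZMod m) : seg a 0 1 = {a} := by
  ext w
  simp [sub_eq_zero]

lemma seg_eq_empty {a : ZMod m} {s t : ℕ} (h : t ≤ s) : seg a s t = ∅ := by
  ext w
  simp only [mem_seg, Finset.notMem_empty, iff_false]
  omega

lemma seg_zero_eq_univ (a : ZMod m) : seg a 0 m = Finset.univ := by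
  ext w
  simp [(w - a).val_lt]

lemma seg_inter_seg (a : ZMod m) (s t s' t' : ℕ) :
    seg a s t ∩ seg a s' t' = seg a (max s s') (min t t') := by
  ext w
  simp only [Finset.mem_inter, mem_seg]
  omega

lemma seg_subset_seg {a : ZMod m} {s t s' t' : ℕ} (hs : s' ≤ s) (ht : t ≤ t') :
    seg a s t ⊆ seg a s' t' := by
  intro w
  simp only [mem_seg]
  omega

lemma seg_subset_compl_seg {a : ZMod m} {s t s' t' : ℕ} (h : t ≤ s' ∨ t' ≤ s) :
    seg a s t ⊆ (seg a s' t')ᶜ := by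
  intro w
  simp only [mem_seg, Finset.mem_compl]
  omega

lemma seg_add_natCast {a : ZMod m} {s t : ℕ} (hst : s ≤ t) (ht : t ≤ m) :
    seg a s t = seg (a + (s : ZMod m)) 0 (t - s) := by
  ext w
  rw [mem_seg, mem_seg, sub_add_natCast _ _ (by omega), val_add_natCast_of_le _ (by omega)]
  have := (w - a).val_lt
  split_ifs <;> omega

lemma compl_seg_eq_seg {a : ZMod m} {s t : ℕ} (ht : t ≤ m) :
    (seg a s t)ᶜ = seg (a + (t : ZMod m)) 0 (m - t + s) := by
  ext w
  rw [Finset.mem_compl, mem_seg, mem_seg, sub_add_natCast _ _ ht,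
    val_add_natCast_of_le _ (by omega)]
  have := (w - a).val_lt
  split_ifs <;> omega

lemma seg_eq_compl_seg {b : ZMod m} {s t p : ℕ} (hs : s ≤ p) (hp : p < t) (ht : t ≤ m) :
    seg b s t = (seg (b + (p : ZMod m)) (t - p) (m - p + s))ᶜ := by
  ext w
  rw [Finset.mem_compl, mem_seg, mem_seg, sub_add_natCast _ _ (by omega),
    val_add_natCast_of_le _ (by omega)]
  have := (w - b).val_lt
  split_ifs <;> omega

lemma image_val_sub_seg (a : ZMod m) {s t : ℕ} (ht : t ≤ m) :
    (seg a s t).image (fun w => (w - a).val) = Finset.Ico s t := by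
  ext p
  simp only [Finset.mem_image, mem_seg, Finset.mem_Ico]
  constructor
  · rintro ⟨w, hw, rfl⟩
    exact hw
  · intro hp
    exact ⟨a + p, by rw [add_sub_cancel_left, val_cast_of_lt (by omega)]; exact ⟨hp, rfl⟩⟩

lemma val_sub_of_cycleGraph_adj {b y z : ZMod m} (h : (cycleGraph m).Adj y z) (hy : y ≠ b)
    (hz : z ≠ b) : (z - b).val = (y - b).val + 1 ∨ (y - b).val = (z - b).val + 1 := by
  have step : ∀ {y z : ZMod m}, z = y + 1 → z ≠ b → (z - b).val = (y - b).val + 1 := by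
    intro y z h hz
    have hval := val_add_natCast_of_le (y - b) (p := 1) NeZero.one_le
    rw [Nat.cast_one, show y - b + 1 = z - b by rw [h]; ring] at hval
    rw [hval, if_pos]
    by_contra hlt
    rw [if_neg hlt] at hval
    have := (y - b).val_lt
    exact hz (sub_eq_zero.mp ((val_eq_zero _).mp (by omega)))
  obtain ⟨-, h | h⟩ := cycleGraph_adj.mp h
  · exact Or.inl (step h hz)
  · exact Or.inr (step h hy)

lemma isBundle_seg (a : ZMod m) (s t : ℕ) : IsBundle (cycleGraph m) (seg a s t) := by
  by_cases hst : s < t ∧ s < m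
  swap
  · left
    ext w
    simp only [Finset.mem_coe, mem_seg, Set.mem_empty_iff_false, iff_false]
    have := (w - a).val_lt
    omega
  right
  have mem (k : ℕ) (hk : s + k < t ∧ s + k < m) :
      a + ((s + k : ℕ) : ZMod m) ∈ (seg a s t : Set _) :=
    (add_natCast_mem_seg hk.2).mpr (by omega)
  have reach (k : ℕ) (hk : s + k < t ∧ s + k < m) :
      ((cycleGraph m).induce (seg a s t : Set _)).Reachable
        ⟨_, mem 0 (by omega)⟩ ⟨_, mem k hk⟩ := by
    induction k with
    | zero => rfl
    | succ k ih =>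
      refine (ih (by omega)).trans (SimpleGraph.Adj.reachable ?_)
      rw [SimpleGraph.comap_adj, Function.Embedding.subtype_apply,
        Function.Embedding.subtype_apply, cycleGraph_adj]
      refine ⟨fun h => ?_, Or.inl (by push_cast; ring)⟩
      have := congrArg ZMod.val (add_left_cancel h)
      rw [val_cast_of_lt (by omega), val_cast_of_lt (by omega)] at this
      omega
  have : Nonempty (seg a s t : Set (ZMod m)) := ⟨⟨_, mem 0 (by omega)⟩⟩
  have reach_all (x : (seg a s t : Set (ZMod m))) :
      ((cycleGraph m).induce (seg a s t : Set _)).Reachable ⟨_, mem 0 (by omega)⟩ x := by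
    obtain ⟨x, hx⟩ := x
    have hx' := mem_seg.mp hx
    have := (x - a).val_lt
    convert reach ((x - a).val - s) (by omega) using 2
    rw [Nat.add_sub_cancel' hx'.1, natCast_zmod_val, add_sub_cancel]
  exact ⟨fun x y => (reach_all x).symm.trans (reach_all y)⟩

lemma IsBundle.eq_seg_of_notMem {S : Finset (ZMod m)} (hS : IsBundle (cycleGraph m) S)
    {b : ZMod m} (hb : b ∉ S) : ∃ s t, s ≤ t ∧ t ≤ m ∧ S = seg b s t := by
  rcases S.eq_empty_or_nonempty with rfl | hne
  · exact ⟨0, 0, le_rfl, Nat.zero_le _, (seg_eq_empty le_rfl).symm⟩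
  have hconn : ((cycleGraph m).induce (S : Set (ZMod m))).Connected :=
    hS.resolve_left (by simpa using hne.ne_empty)
  obtain ⟨ws, hws, hmin⟩ := S.exists_min_image (fun w => (w - b).val) hne
  obtain ⟨wt, hwt, hmax⟩ := S.exists_max_image (fun w => (w - b).val) hne
  refine ⟨(ws - b).val, (wt - b).val + 1, by have := hmin wt hwt; omega, (wt - b).val_lt,
    Finset.Subset.antisymm (fun w hw => mem_seg.mpr ⟨hmin w hw, Nat.lt_succ_of_le (hmax w hw)⟩)
      fun w hw => ?_⟩
  by_contra hwS
  have hw := mem_seg.mp hw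
  -- steps inside `S` avoid `b`, so they change the position by one: a walk in `S` from the first
  -- to the last position cannot jump over the missing position of `w`
  obtain ⟨p⟩ := hconn.preconnected ⟨ws, hws⟩ ⟨wt, hwt⟩
  have hne_w : ∀ y ∈ S, y ≠ w := fun y hy h => hwS (h ▸ hy)
  obtain ⟨d, -, hin, hout⟩ := p.exists_boundary_dart {y | (y.1 - b).val < (w - b).val}
    (by
      have : (ws - b).val ≠ (w - b).val := fun h =>
        hne_w ws hws (sub_left_injective (val_injective m h))
      simp only [Set.mem_ofPred_eq]
      omega)
    (by simp only [Set.mem_ofPred_eq]; omega)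
  simp only [Set.mem_ofPred_eq, not_lt] at hin hout
  have hadj : (cycleGraph m).Adj d.fst.1 d.snd.1 := d.adj
  have hy : d.fst.1 ≠ b := fun h => hb (h ▸ d.fst.2)
  have hz : d.snd.1 ≠ b := fun h => hb (h ▸ d.snd.2)
  have hzw : (d.snd.1 - b).val ≠ (w - b).val := fun h =>
    hne_w _ d.snd.2 (sub_left_injective (val_injective m h))
  have := val_sub_of_cycleGraph_adj hadj hy hz
  omega

lemma IsBundle.eq_compl_seg_of_mem {S : Finset (ZMod m)} (hS : IsBundle (cycleGraph m) S)
    {a : ZMod m} (ha : a ∈ S) : ∃ s t, s ≤ t ∧ t ≤ m ∧ S = (seg a s t)ᶜ := by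
  by_cases huniv : ∃ b, b ∉ S
  · obtain ⟨b, hb⟩ := huniv
    obtain ⟨s, t, -, ht, rfl⟩ := hS.eq_seg_of_notMem hb
    have hp := mem_seg.mp ha
    refine ⟨t - (a - b).val, m - (a - b).val + s, by omega, by omega, ?_⟩
    rw [seg_eq_compl_seg hp.1 hp.2 ht, natCast_zmod_val, add_sub_cancel]
  · push Not at huniv
    refine ⟨0, 0, le_rfl, Nat.zero_le _, ?_⟩
    rw [seg_eq_empty le_rfl, Finset.compl_empty]
    exact Finset.eq_univ_iff_forall.mpr huniv

lemma IsBundle.exists_eq_seg_zero {S : Finset (ZMod m)} (hS : IsBundle (cycleGraph m) S)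
    (hne : S.Nonempty) : ∃ a x, 0 < x ∧ x ≤ m ∧ S = seg a 0 x := by
  by_cases huniv : ∃ b, b ∉ S
  · obtain ⟨b, hb⟩ := huniv
    obtain ⟨s, t, hst, ht, rfl⟩ := hS.eq_seg_of_notMem hb
    obtain ⟨w, hw⟩ := hne
    have := mem_seg.mp hw
    exact ⟨_, t - s, by omega, by omega, seg_add_natCast hst ht⟩
  · push Not at huniv
    exact ⟨0, m, Nat.pos_of_neZero m, le_rfl,
      by rw [seg_zero_eq_univ]; exact Finset.eq_univ_iff_forall.mpr huniv⟩

lemma IsBundle.inter {S T : Finset (ZMod m)} (hS : IsBundle (cycleGraph m) S)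
    (hT : IsBundle (cycleGraph m) T) (hST : ∃ b, b ∉ S ∪ T) : IsBundle (cycleGraph m) (S ∩ T) := by
  obtain ⟨b, hb⟩ := hST
  rw [Finset.mem_union, not_or] at hb
  obtain ⟨s, t, -, -, rfl⟩ := hS.eq_seg_of_notMem hb.1
  obtain ⟨s', t', -, -, rfl⟩ := hT.eq_seg_of_notMem hb.2
  rw [seg_inter_seg]
  exact isBundle_seg _ _ _

lemma IsSplitOn.union_eq_compl {P : Fin 3 → Finset (ZMod m)}
    (hP : IsSplitOn (cycleGraph m) Finset.univ 3 P) {r s u : Fin 3} (hrs : r ≠ s) (hru : r ≠ u)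
    (hall : ∀ k, k = r ∨ k = s ∨ k = u) : P s ∪ P u = (P r)ᶜ := by
  obtain ⟨-, hdisj, -, hcov⟩ := hP
  ext w
  simp only [Finset.mem_union, Finset.mem_compl]
  constructor
  · rintro (hw | hw) hwr
    · exact Finset.disjoint_left.mp (hdisj r s hrs) hwr hw
    · exact Finset.disjoint_left.mp (hdisj r u hru) hwr hw
  · intro hwr
    obtain ⟨k, hk⟩ := hcov w (Finset.mem_univ w)
    rcases hall k with rfl | rfl | rfl
    · exact absurd hk hwr
    · exact Or.inl hk
    · exact Or.inr hk

theorem IsSplitOn.exists_cuts {P : Fin 3 → Finset (ZMod m)}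
    (hP : IsSplitOn (cycleGraph m) Finset.univ 3 P) {a : ZMod m} {r : Fin 3} (ha : a ∈ P r) :
    ∃ s u e₁ e₂ e₃, r ≠ s ∧ r ≠ u ∧ s ≠ u ∧ e₁ ≤ e₂ ∧ e₂ ≤ e₃ ∧ e₃ ≤ m ∧
      P r = (seg a e₁ e₃)ᶜ ∧ P s = seg a e₁ e₂ ∧ P u = seg a e₂ e₃ := by
  obtain ⟨s, u, hrs, hru, hsu, hall⟩ := Fin.exists_two_others r
  obtain ⟨e₁, e₃, h₁₃, h₃, hr⟩ := (hP.1 r).eq_compl_seg_of_mem ha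
  have hunion : P s ∪ P u = seg a e₁ e₃ := by rw [hP.union_eq_compl hrs hru hall, hr, compl_compl]
  have hnot (k : Fin 3) (hk : r ≠ k) : a ∉ P k := Finset.disjoint_left.mp (hP.2.1 r k hk) ha
  obtain ⟨s₁, s₂, -, hs₂, hs⟩ := (hP.1 s).eq_seg_of_notMem (hnot s hrs)
  obtain ⟨u₁, u₂, -, hu₂, hu⟩ := (hP.1 u).eq_seg_of_notMem (hnot u hru)
  rcases (P s).eq_empty_or_nonempty with hs_empty | ⟨ws, hws⟩
  · refine ⟨s, u, e₁, e₁, e₃, hrs, hru, hsu, le_rfl, h₁₃, h₃, hr, ?_, ?_⟩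
    · rw [hs_empty, seg_eq_empty le_rfl]
    · rwa [hs_empty, Finset.empty_union] at hunion
  rcases (P u).eq_empty_or_nonempty with hu_empty | ⟨wu, hwu⟩
  · refine ⟨s, u, e₁, e₃, e₃, hrs, hru, hsu, h₁₃, le_rfl, h₃, hr, ?_, ?_⟩
    · rwa [hu_empty, Finset.union_empty] at hunion
    · rw [hu_empty, seg_eq_empty le_rfl]
  have hinj : Function.Injective fun w : ZMod m => (w - a).val :=
    (val_injective m).comp sub_left_injective
  have hIco := congrArg (Finset.image fun w => (w - a).val) hunion
  rw [Finset.image_union, hs, hu, image_val_sub_seg a hs₂, image_val_sub_seg a hu₂,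
    image_val_sub_seg a h₃] at hIco
  have hd := (Finset.disjoint_image hinj).mpr (hP.2.1 s u hsu)
  rw [hs, hu, image_val_sub_seg a hs₂, image_val_sub_seg a hu₂] at hd
  rw [hs, mem_seg] at hws
  rw [hu, mem_seg] at hwu
  rcases Finset.Ico_adjacent_of_union_eq_Ico (by omega) (by omega) hIco hd with
    ⟨rfl, rfl, rfl⟩ | ⟨rfl, rfl, rfl⟩
  · exact ⟨s, u, s₁, s₂, u₂, hrs, hru, hsu, by omega, by omega, h₃, hr, hs, hu⟩
  · exact ⟨u, s, u₁, u₂, s₂, hru, hrs, hsu.symm, by omega, by omega, h₃, hr, hu, hs⟩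

theorem IsSplitOn.exists_cuts_of_seg_zero_subset {P : Fin 3 → Finset (ZMod m)}
    (hP : IsSplitOn (cycleGraph m) Finset.univ 3 P) {a : ZMod m} {x : ℕ} {r : Fin 3} (hx : 0 < x)
    (hxm : x ≤ m) (hxP : seg a 0 x ⊆ P r) :
    ∃ s u e₁ e₂ e₃, x ≤ e₁ ∧ e₁ ≤ e₂ ∧ e₂ ≤ e₃ ∧ e₃ ≤ m ∧
      P s = seg a e₁ e₂ ∧ P u = seg a e₂ e₃ := by
  have ha : a ∈ P r := hxP (by simpa using hx)
  obtain ⟨s, u, e₁, e₂, e₃, -, -, -, h₁₂, h₂₃, h₃, hr, hs, hu⟩ := hP.exists_cuts ha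
  by_cases hxe : x ≤ e₁
  · exact ⟨s, u, e₁, e₂, e₃, hxe, h₁₂, h₂₃, h₃, hs, hu⟩
  -- the part containing `seg a 0 x` is everything, so the other two are empty
  have he : e₃ ≤ e₁ := by
    by_contra he
    have hmem := hxP ((add_natCast_mem_seg (by omega)).mpr ⟨Nat.zero_le e₁, not_le.mp hxe⟩)
    rw [hr, Finset.mem_compl, add_natCast_mem_seg (by omega)] at hmem
    omega
  refine ⟨s, u, m, m, m, hxm, le_rfl, le_rfl, le_rfl, ?_, ?_⟩
  · rw [hs, seg_eq_empty (by omega), seg_eq_empty le_rfl]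
  · rw [hu, seg_eq_empty (by omega), seg_eq_empty le_rfl]

def cutSplit (a : ZMod m) (e₁ e₂ e₃ : ℕ) : Fin 3 → Finset (ZMod m) :=
  ![seg a e₁ e₂, seg a e₂ e₃, (seg a e₁ e₃)ᶜ]

lemma isSplitOn_cutSplit (a : ZMod m) {e₁ e₂ e₃ : ℕ} (h₁₂ : e₁ ≤ e₂) (h₂₃ : e₂ ≤ e₃)
    (h₃ : e₃ ≤ m) : IsSplitOn (cycleGraph m) Finset.univ 3 (cutSplit a e₁ e₂ e₃) := by
  refine ⟨fun k => ?_, fun k l hkl => ?_, fun k => Finset.subset_univ _, fun w _ => ?_⟩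
  · fin_cases k
    · exact isBundle_seg a _ _
    · exact isBundle_seg a _ _
    · simpa [cutSplit, compl_seg_eq_seg h₃] using isBundle_seg _ _ _
  · rw [Finset.disjoint_left]
    intro w hk hl
    fin_cases k <;> fin_cases l <;>
      simp only [cutSplit, Fin.zero_eta, Fin.mk_one, Fin.reduceFinMk, Matrix.cons_val,
        Finset.mem_compl, mem_seg] at hk hl hkl ⊢ <;> omega
  · by_cases h₁ : e₁ ≤ (w - a).val ∧ (w - a).val < e₂
    · exact ⟨0, by simpa [cutSplit] using h₁⟩
    by_cases h₂ : e₂ ≤ (w - a).val ∧ (w - a).val < e₃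
    · exact ⟨1, by simpa [cutSplit] using h₂⟩
    exact ⟨2, by simp [cutSplit]; omega⟩

theorem exists_isSufficientAllocation_of_seg_zero_subset {u : Fin 3 → ZMod m → ℝ}
    {μ : Fin 3 → ℝ} {c : ℝ} (hc : c ≤ 1) (hu : ∀ a v, 0 ≤ u a v) (hμ : ∀ a, 0 ≤ μ a)
    {i j t : Fin 3} (hall : ∀ a, a = i ∨ a = j ∨ a = t) (hij : i ≠ j) (hit : i ≠ t) (hjt : j ≠ t)
    (ht : 3 * μ t ≤ bval (u t) Finset.univ) {P Q : Fin 3 → Finset (ZMod m)}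
    (hP : IsSplitOn (cycleGraph m) Finset.univ 3 P) (hPμ : ∀ k, μ i ≤ bval (u i) (P k))
    (hQ : IsSplitOn (cycleGraph m) Finset.univ 3 Q) (hQμ : ∀ k, μ j ≤ bval (u j) (Q k))
    {a : ZMod m} {x : ℕ} {r l : Fin 3} (hx : 0 < x) (hxm : x ≤ m) (hxP : seg a 0 x ⊆ P r)
    (hxQ : seg a 0 x ⊆ Q l) (hxi : c * μ i ≤ bval (u i) (seg a 0 x)) :
    ∃ R, IsSufficientAllocation (cycleGraph m) u μ c R := by
  obtain ⟨s, s', e₁, e₂, e₃, hxe, h₁₂, h₂₃, h₃, hs, hs'⟩ :=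
    hP.exists_cuts_of_seg_zero_subset hx hxm hxP
  obtain ⟨v, v', n, n', p, hxn, hnn', hn'p, hp, hv, hv'⟩ :=
    hQ.exists_cuts_of_seg_zero_subset hx hxm hxQ
  have hi₁ : μ i ≤ bval (u i) (seg a e₁ e₂) := hs ▸ hPμ s
  have hi₂ : μ i ≤ bval (u i) (seg a e₂ e₃) := hs' ▸ hPμ s'
  have hj₁ : μ j ≤ bval (u j) (seg a n n') := hv ▸ hQμ v
  have hj₂ : μ j ≤ bval (u j) (seg a n' p) := hv' ▸ hQμ v'
  have hc_le (b : Fin 3) {y : ℝ} (hy : μ b ≤ y) : c * μ b ≤ y :=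
    (mul_le_of_le_one_left (hμ b) hc).trans hy
  have mono (b : Fin 3) {S T : Finset (ZMod m)} (h : S ⊆ T) := bval_mono (hu b) h
  have hsplit := isSplitOn_cutSplit a (Nat.zero_le x) (hxn.trans hnn') (hn'p.trans hp)
  by_cases htA : c * μ t ≤ bval (u t) (seg a x n')
  · exact exists_isSufficientAllocation_of_split hall hij hit hjt hsplit 0 2 1
      (by decide) (by decide) (by decide) hxi
      (hc_le j (hj₂.trans (mono j (seg_subset_compl_seg (Or.inr le_rfl))))) htA
  by_cases htB : c * μ t ≤ bval (u t) (seg a 0 n')ᶜ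
  · exact exists_isSufficientAllocation_of_split hall hij hit hjt hsplit 0 1 2
      (by decide) (by decide) (by decide) hxi
      (hc_le j (hj₁.trans (mono j (seg_subset_seg hxn le_rfl)))) htB
  have htx : c * μ t ≤ bval (u t) (seg a 0 x) := by
    have hsum := hsplit.sum_bval (u t)
    simp only [Fin.sum_univ_three, cutSplit, Matrix.cons_val] at hsum
    linarith [hc_le t le_rfl]
  by_cases he₂ : e₂ ≤ n'
  · exact exists_isSufficientAllocation_of_split hall hij hit hjt
      (isSplitOn_cutSplit a (Nat.zero_le _) h₁₂ (h₂₃.trans h₃)) 1 2 0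
      (by decide) (by decide) (by decide) (hc_le i hi₁)
      (hc_le j (hj₂.trans (mono j (seg_subset_compl_seg (Or.inr he₂)))))
      (htx.trans (mono t (seg_subset_seg le_rfl hxe)))
  · exact exists_isSufficientAllocation_of_split hall hij hit hjt
      (isSplitOn_cutSplit a (by omega) h₂₃ h₃) 1 0 2
      (by decide) (by decide) (by decide) (hc_le i hi₂)
      (hc_le j (hj₁.trans (mono j (seg_subset_seg le_rfl (by omega)))))
      (htx.trans (mono t (seg_subset_compl_seg (Or.inl hxn))))

theorem exists_seg_zero_subset_inter {u : ZMod m → ℝ} {μ c : ℝ} (hc : c ≤ 1)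
    (hu : ∀ v, 0 ≤ u v) (hμ : 0 ≤ μ) {P Q : Fin 3 → Finset (ZMod m)}
    (hP : IsSplitOn (cycleGraph m) Finset.univ 3 P) (hPμ : ∀ k, μ ≤ bval u (P k))
    (hQ : IsSplitOn (cycleGraph m) Finset.univ 3 Q) {k l : Fin 3}
    (hint : c * μ ≤ bval u (P k ∩ Q l)) :
    ∃ a x r l', 0 < x ∧ x ≤ m ∧ seg a 0 x ⊆ P r ∧ seg a 0 x ⊆ Q l' ∧
      c * μ ≤ bval u (seg a 0 x) := by
  suffices ∃ X r l', IsBundle (cycleGraph m) X ∧ X.Nonempty ∧ X ⊆ P r ∧ X ⊆ Q l' ∧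
      c * μ ≤ bval u X by
    obtain ⟨X, r, l', hX, hne, hXP, hXQ, hXu⟩ := this
    obtain ⟨a, x, hx, hxm, rfl⟩ := hX.exists_eq_seg_zero hne
    exact ⟨a, x, r, l', hx, hxm, hXP, hXQ, hXu⟩
  by_cases hcμ : c * μ ≤ 0
  · obtain ⟨r, hr⟩ := hP.2.2.2 0 (Finset.mem_univ 0)
    obtain ⟨l', hl'⟩ := hQ.2.2.2 0 (Finset.mem_univ 0)
    exact ⟨{0}, r, l', seg_zero_one (0 : ZMod m) ▸ isBundle_seg 0 0 1,
      Finset.singleton_nonempty 0, Finset.singleton_subset_iff.mpr hr,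
      Finset.singleton_subset_iff.mpr hl', hcμ.trans (bval_nonneg hu _)⟩
  push Not at hcμ
  have hμ_pos : 0 < μ := hμ.lt_of_ne fun h => by rw [← h, mul_zero] at hcμ; exact hcμ.false
  by_cases hcov : ∃ b, b ∉ P k ∪ Q l
  · exact ⟨P k ∩ Q l, k, l, (hP.1 k).inter (hQ.1 l) hcov,
      Finset.nonempty_of_sum_ne_zero (hcμ.trans_le hint).ne',
      Finset.inter_subset_left, Finset.inter_subset_right, hint⟩
  -- `P k` and `Q l` cover the cycle, so another part of `P` lies inside `Q l`
  push Not at hcov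
  obtain ⟨s, -, hks, -⟩ := Fin.exists_two_others k
  refine ⟨P s, s, l, hP.1 s, Finset.nonempty_of_sum_ne_zero (hμ_pos.trans_le (hPμ s)).ne',
    subset_rfl, fun w hw => ?_, (mul_le_of_le_one_left hμ hc).trans (hPμ s)⟩
  have hwk : w ∉ P k := fun h => Finset.disjoint_left.mp (hP.2.1 k s hks) h hw
  simpa [hwk] using hcov w

end Cycle

theorem stmt12_general (m : ℕ) [NeZero m] (c : ℝ) (hc1 : c ≤ 1)
    (us : Fin 3 → ZMod m → ℝ) (hus : ∀ i v, 0 ≤ us i v)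
    (i j : Fin 3) (hij : i ≠ j)
    (P Q : Fin 3 → Finset (ZMod m))
    (hP : IsSplitOn (cycleGraph m) Finset.univ 3 P)
    (hPmms : ∀ k, mms (cycleGraph m) 3 (us i) ≤ bval (us i) (P k))
    (hQ : IsSplitOn (cycleGraph m) Finset.univ 3 Q)
    (hQmms : ∀ k, mms (cycleGraph m) 3 (us j) ≤ bval (us j) (Q k))
    (k l : Fin 3)
    (hint : c * mms (cycleGraph m) 3 (us i) ≤ bval (us i) (P k ∩ Q l)) :
    ∃ R : Fin 3 → Finset (ZMod m), IsSplitOn (cycleGraph m) Finset.univ 3 R ∧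
      ∀ a, c * mms (cycleGraph m) 3 (us a) ≤ bval (us a) (R a) := by
  obtain ⟨t, hit, hjt, hall⟩ := Fin.exists_third hij
  have hμ (a : Fin 3) : 0 ≤ mms (cycleGraph m) 3 (us a) := mms_nonneg (hus a) hP
  obtain ⟨a, x, r, l', hx, hxm, hxP, hxQ, hxi⟩ :=
    exists_seg_zero_subset_inter hc1 (hus i) (hμ i) hP hPmms hQ hint
  exact exists_isSufficientAllocation_of_seg_zero_subset hc1 hus hμ hall hij hit hjt
    (by exact_mod_cast mul_mms_le (hus t)) hP hPmms hQ hQmms hx hxm hxP hxQ hxi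

/-- Lemma on a valuable intersection of bundles from two mms-splits:
if the intersection of a bundle of agent `i`'s mms-split with a bundle of agent `j`'s
mms-split is worth at least `c·mms(i)` to agent `i`, a `c`-sufficient allocation
exists for the three agents. -/
theorem stmt12 (m : ℕ) [NeZero m] (hm : 3 ≤ m) (c : ℝ) (hc0 : 0 < c) (hc1 : c ≤ 1)
    (us : Fin 3 → ZMod m → ℝ) (hus : ∀ i v, 0 ≤ us i v)
    (i j : Fin 3) (hij : i ≠ j)
    (P Q : Fin 3 → Finset (ZMod m))
    (hP : IsSplitOn (cycleGraph m) Finset.univ 3 P)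
    (hPmms : ∀ k, mms (cycleGraph m) 3 (us i) ≤ bval (us i) (P k))
    (hQ : IsSplitOn (cycleGraph m) Finset.univ 3 Q)
    (hQmms : ∀ k, mms (cycleGraph m) 3 (us j) ≤ bval (us j) (Q k))
    (k l : Fin 3)
    (hint : c * mms (cycleGraph m) 3 (us i) ≤ bval (us i) (P k ∩ Q l)) :
    ∃ R : Fin 3 → Finset (ZMod m), IsSplitOn (cycleGraph m) Finset.univ 3 R ∧
      ∀ a, c * mms (cycleGraph m) 3 (us a) ≤ bval (us a) (R a) :=
  stmt12_general m c hc1 us hus i j hij P Q hP hPmms hQ hQmms k l hint
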